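/- arXiv:0811.1846 — 5 statements merged into one kernel-verified Lean document; each statement's English description precedes it below -/
import Mathlib

section
/- Let A be an m × m complex matrix and B an n × n complex matrix. The set of eigenvalues of the Kronecker product A ⊗ B is exactly { λ·μ : λ is an eigenvalue of A and μ is an eigenvalue of B }. In particular, if every eigenvalue of a square complex matrix A has modulus strictly less than 1, then every eigenvalue of A ⊗ A has modulus strictly less than 1. -/
open Kronecker

section Aux

open Kronecker Module

/-- Membership in the spectrum of a matrix over ℂ is the same as being an eigenvalue of the
associated linear map. -/
lemma mem_spectrum_iff_hasEigenvalue {ι : Type*} [Fintype ι] [DecidableEq ι]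
    (M : Matrix ι ι ℂ) (z : ℂ) :
    z ∈ spectrum ℂ M ↔ Module.End.HasEigenvalue (Matrix.toLin' M) z := by
  rw [← AlgEquiv.spectrum_eq (Matrix.toLinAlgEquiv <| Pi.basisFun ℂ ι),
    ← Module.End.hasEigenvalue_iff_mem_spectrum]
  rfl

lemma hasEigenvalue_of_mulVec {ι : Type*} [Fintype ι] [DecidableEq ι]
    {M : Matrix ι ι ℂ} {z : ℂ} {v : ι → ℂ} (hv : v ≠ 0) (h : M.mulVec v = z • v) :
    Module.End.HasEigenvalue (Matrix.toLin' M) z := by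
  apply Module.End.hasEigenvalue_of_hasEigenvector (x := v)
  exact ⟨Module.End.mem_eigenspace_iff.2 (by rwa [Matrix.toLin'_apply]), hv⟩

/-- Commuting endomorphisms: every eigenvalue of the product is a product of eigenvalues. -/
lemma exists_eigen_mul {V : Type*} [AddCommGroup V] [Module ℂ V] [FiniteDimensional ℂ V]
    {P Q : Module.End ℂ V} (hPQ : P * Q = Q * P) {z : ℂ}
    (hz : (P * Q).HasEigenvalue z) :
    ∃ lam, P.HasEigenvalue lam ∧ ∃ mu, Q.HasEigenvalue mu ∧ z = lam * mu := by
  set E : Submodule ℂ V := Module.End.eigenspace (P * Q) z with hE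
  have hEmem : ∀ x, x ∈ E ↔ P (Q x) = z • x := by
    intro x; rw [hE, Module.End.mem_eigenspace_iff]; rfl
  have hPE : ∀ x ∈ E, P x ∈ E := by
    intro x hx
    rw [hEmem] at hx ⊢
    have : Q (P x) = P (Q x) := by
      have := congrArg (fun f : Module.End ℂ V => f x) hPQ
      simpa using this.symm
    rw [this, ← map_smul, ← hx]
  have hQE : ∀ x ∈ E, Q x ∈ E := by
    intro x hx
    rw [hEmem] at hx ⊢
    have h1 : P (Q (Q x)) = Q (P (Q x)) := by
      have := congrArg (fun f : Module.End ℂ V => f (Q x)) hPQ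
      simpa using this
    rw [h1, hx, map_smul]
  set P' : Module.End ℂ E := P.restrict hPE with hP'
  set Q' : Module.End ℂ E := Q.restrict hQE with hQ'
  have hEbot : E ≠ ⊥ := hz
  have : Nontrivial E := Submodule.nontrivial_iff_ne_bot.2 hEbot
  obtain ⟨mu, hmu⟩ := Q'.exists_eigenvalue
  set F : Submodule ℂ E := Module.End.eigenspace Q' mu with hF
  have hPF : ∀ x ∈ F, P' x ∈ F := by
    intro x hx
    rw [hF, Module.End.mem_eigenspace_iff] at hx ⊢
    have hcomm : Q' (P' x) = P' (Q' x) := by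
      apply Subtype.ext
      show Q (P x) = P (Q x)
      have := congrArg (fun f : Module.End ℂ V => f (x : V)) hPQ
      simpa using this.symm
    rw [hcomm, hx, map_smul]
  set P'' : Module.End ℂ F := P'.restrict hPF with hP''
  have hFbot : F ≠ ⊥ := hmu
  have : Nontrivial F := Submodule.nontrivial_iff_ne_bot.2 hFbot
  obtain ⟨lam, hlam⟩ := P''.exists_eigenvalue
  obtain ⟨u, hu⟩ := hlam.exists_hasEigenvector
  set w : V := ((u : E) : V) with hw
  have hwne : w ≠ 0 := by
    simp only [hw]
    intro h
    apply hu.2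
    have h1 : (u : E) = 0 := Subtype.ext (by simpa using h)
    exact Subtype.ext (by simpa using h1)
  have hPw : P w = lam • w := by
    have := hu.apply_eq_smul
    have := congrArg (fun y : F => ((y : E) : V)) this
    simpa [hw, hP'', hP', LinearMap.restrict_apply] using this
  have hQw : Q w = mu • w := by
    have hmem : (u : E) ∈ F := u.2
    have hmem' : Q' (u : E) = mu • (u : E) := Module.End.mem_eigenspace_iff.1 hmem
    have := congrArg (fun y : E => (y : V)) hmem'
    simpa [hw, hQ', LinearMap.restrict_apply] using this
  have hzw : P (Q w) = z • w := by
    have hmem : w ∈ E := ((u : E)).2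
    rwa [hEmem] at hmem
  have : z • w = (lam * mu) • w := by
    rw [← hzw, hQw, map_smul, hPw, smul_smul, mul_comm]
  have hzlm : z = lam * mu := by
    by_contra hne
    have : (z - lam * mu) • w = 0 := by rw [sub_smul, this, sub_self]
    rcases smul_eq_zero.1 this with h | h
    · exact hne (sub_eq_zero.1 h)
    · exact hwne h
  refine ⟨lam, ?_, mu, ?_, hzlm⟩
  · exact Module.End.hasEigenvalue_of_hasEigenvector
      ⟨Module.End.mem_eigenspace_iff.2 hPw, hwne⟩
  · exact Module.End.hasEigenvalue_of_hasEigenvector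
      ⟨Module.End.mem_eigenspace_iff.2 hQw, hwne⟩

lemma kron_mulVec {m n : ℕ} (A : Matrix (Fin m) (Fin m) ℂ) (B : Matrix (Fin n) (Fin n) ℂ)
    (v : Fin m → ℂ) (w : Fin n → ℂ) :
    (A ⊗ₖ B).mulVec (fun p => v p.1 * w p.2) =
      fun p => (A.mulVec v p.1) * (B.mulVec w p.2) := by
  funext p
  simp only [Matrix.mulVec, dotProduct, Matrix.kroneckerMap_apply,
    Fintype.sum_prod_type, Finset.sum_mul_sum]
  exact Finset.sum_congr rfl fun k _ => Finset.sum_congr rfl fun l _ => by ring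

/-- The spectrum of a Kronecker product. -/
lemma spec_kron {m n : ℕ} (A : Matrix (Fin m) (Fin m) ℂ) (B : Matrix (Fin n) (Fin n) ℂ) :
    spectrum ℂ (A ⊗ₖ B) =
      {z : ℂ | ∃ lam ∈ spectrum ℂ A, ∃ mu ∈ spectrum ℂ B, z = lam * mu} := by
  ext z
  simp only [Set.mem_setOf_eq]
  constructor
  · intro hz
    rw [mem_spectrum_iff_hasEigenvalue] at hz
    set P : Module.End ℂ (Fin m × Fin n → ℂ) :=
      Matrix.toLin' (A ⊗ₖ (1 : Matrix (Fin n) (Fin n) ℂ)) with hP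
    set Q : Module.End ℂ (Fin m × Fin n → ℂ) :=
      Matrix.toLin' ((1 : Matrix (Fin m) (Fin m) ℂ) ⊗ₖ B) with hQ
    have hPQmat : (A ⊗ₖ (1 : Matrix (Fin n) (Fin n) ℂ)) *
        ((1 : Matrix (Fin m) (Fin m) ℂ) ⊗ₖ B) = A ⊗ₖ B := by
      rw [← Matrix.mul_kronecker_mul, mul_one, one_mul]
    have hQPmat : ((1 : Matrix (Fin m) (Fin m) ℂ) ⊗ₖ B) *
        (A ⊗ₖ (1 : Matrix (Fin n) (Fin n) ℂ)) = A ⊗ₖ B := by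
      rw [← Matrix.mul_kronecker_mul, mul_one, one_mul]
    have hPQ : P * Q = Q * P := by
      rw [hP, hQ, Module.End.mul_eq_comp, Module.End.mul_eq_comp, ← Matrix.toLin'_mul,
        ← Matrix.toLin'_mul, hPQmat, hQPmat]
    have hz' : (P * Q).HasEigenvalue z := by
      rwa [hP, hQ, Module.End.mul_eq_comp, ← Matrix.toLin'_mul, hPQmat]
    obtain ⟨lam, hlam, mu, hmu, hzlm⟩ := exists_eigen_mul hPQ hz'
    obtain ⟨u, hu⟩ := hlam.exists_hasEigenvector
    obtain ⟨u', hu'⟩ := hmu.exists_hasEigenvector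
    have hu1 : (A ⊗ₖ (1 : Matrix (Fin n) (Fin n) ℂ)).mulVec u = lam • u := by
      have := hu.apply_eq_smul
      rwa [hP, Matrix.toLin'_apply] at this
    have hu2 : ((1 : Matrix (Fin m) (Fin m) ℂ) ⊗ₖ B).mulVec u' = mu • u' := by
      have := hu'.apply_eq_smul
      rwa [hQ, Matrix.toLin'_apply] at this
    obtain ⟨⟨i, j⟩, hij⟩ := Function.ne_iff.1 hu.2
    obtain ⟨⟨i', j'⟩, hij'⟩ := Function.ne_iff.1 hu'.2
    refine ⟨lam, ?_, mu, ?_, hzlm⟩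
    · rw [mem_spectrum_iff_hasEigenvalue]
      refine hasEigenvalue_of_mulVec (v := fun k => u (k, j)) ?_ ?_
      · intro h0
        exact hij (congrFun h0 i)
      · funext a
        have h := congrFun hu1 (a, j)
        simp only [Matrix.mulVec, dotProduct, Matrix.kroneckerMap_apply,
          Fintype.sum_prod_type, Matrix.one_apply, mul_ite, mul_one, mul_zero, ite_mul,
          zero_mul, Finset.sum_ite_eq, Finset.mem_univ, if_true, Pi.smul_apply,
          smul_eq_mul] at h ⊢
        exact h
    · rw [mem_spectrum_iff_hasEigenvalue]
      refine hasEigenvalue_of_mulVec (v := fun l => u' (i', l)) ?_ ?_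
      · intro h0
        exact hij' (congrFun h0 j')
      · funext b
        have h := congrFun hu2 (i', b)
        simp only [Matrix.mulVec, dotProduct, Matrix.kroneckerMap_apply,
          Fintype.sum_prod_type, Matrix.one_apply, ite_mul, one_mul, zero_mul,
          Pi.smul_apply, smul_eq_mul] at h
        rw [Finset.sum_comm] at h
        simp only [Finset.sum_ite_eq, Finset.mem_univ, if_true] at h
        simp only [Matrix.mulVec, dotProduct, Pi.smul_apply, smul_eq_mul]
        exact h
  · rintro ⟨lam, hlam, mu, hmu, rfl⟩
    rw [mem_spectrum_iff_hasEigenvalue] at hlam hmu ⊢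
    obtain ⟨v, hv⟩ := hlam.exists_hasEigenvector
    obtain ⟨w, hw⟩ := hmu.exists_hasEigenvector
    have hv1 : A.mulVec v = lam • v := by
      have := hv.apply_eq_smul; rwa [Matrix.toLin'_apply] at this
    have hw1 : B.mulVec w = mu • w := by
      have := hw.apply_eq_smul; rwa [Matrix.toLin'_apply] at this
    obtain ⟨i, hi⟩ := Function.ne_iff.1 hv.2
    obtain ⟨j, hj⟩ := Function.ne_iff.1 hw.2
    refine hasEigenvalue_of_mulVec (v := fun p => v p.1 * w p.2) ?_ ?_
    · intro h0
      exact mul_ne_zero hi hj (congrFun h0 (i, j))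
    · rw [kron_mulVec, hv1, hw1]
      funext p
      simp [smul_eq_mul]
      ring

end Aux
/-- The eigenvalues of `A ⊗ B` are exactly the products of an eigenvalue of `A` with an
eigenvalue of `B`; in particular, if all eigenvalues of a square complex matrix `C` have
modulus `< 1`, then so do all eigenvalues of `C ⊗ C`. -/
theorem spectrum_kronecker {m n : ℕ} (A : Matrix (Fin m) (Fin m) ℂ)
    (B : Matrix (Fin n) (Fin n) ℂ) :
    spectrum ℂ (A ⊗ₖ B) =
      {z : ℂ | ∃ lam ∈ spectrum ℂ A, ∃ mu ∈ spectrum ℂ B, z = lam * mu} ∧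
    ∀ (k : ℕ) (C : Matrix (Fin k) (Fin k) ℂ),
      (∀ lam ∈ spectrum ℂ C, ‖lam‖ < 1) →
      ∀ z ∈ spectrum ℂ (C ⊗ₖ C), ‖z‖ < 1 := by
  refine ⟨spec_kron A B, ?_⟩
  intro k C h z hz
  rw [spec_kron] at hz
  obtain ⟨lam, hl, mu, hm, rfl⟩ := hz
  have h1 := h lam hl
  have h2 := h mu hm
  have n1 : 0 ≤ ‖lam‖ := norm_nonneg _
  have n2 : 0 ≤ ‖mu‖ := norm_nonneg _
  rw [norm_mul]
  nlinarith
end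

section
/- Let A be a p × p real matrix all of whose complex eigenvalues have modulus strictly less than 1, and let Ω be a p × p real matrix. If Γ₁ and Γ₂ are p × p real matrices satisfying Γ₁ = A Γ₁ Aᵀ + Ω and Γ₂ = A Γ₂ Aᵀ + Ω, then Γ₁ = Γ₂. Hence the equation Γ = A Γ Aᵀ + Ω has exactly one solution, namely Γ = Σ_{k=0}^∞ A^k Ω (Aᵀ)^k. -/
open Matrix

attribute [local instance] Matrix.frobeniusNormedAddCommGroup
attribute [local instance] Matrix.frobeniusNormedRing
attribute [local instance] Matrix.frobeniusNormedAlgebra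

open Filter Topology

/-- Geometric decay of powers of a matrix whose eigenvalues all lie in the open unit disc. -/
lemma pow_norm_geo_decay {p : ℕ} (A : Matrix (Fin p) (Fin p) ℝ)
    (hA : ∀ μ : ℂ, μ ∈ spectrum ℂ (A.map (Complex.ofReal ·)) → ‖μ‖ < 1) :
    ∃ (r : ℝ) (N : ℕ), 0 ≤ r ∧ r < 1 ∧ ∀ n ≥ N, ‖A ^ n‖ ≤ r ^ n := by
  set B : Matrix (Fin p) (Fin p) ℂ := A.map (Complex.ofReal ·) with hB
  -- spectral radius of B is < 1
  have hfin : (spectrum ℂ B).Finite := Matrix.finite_spectrum B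
  have hrad : spectralRadius ℂ B < 1 := by
    set c : NNReal := hfin.toFinset.sup (fun μ => ‖μ‖₊) with hc
    have hc1 : c < 1 := by
      rw [hc, Finset.sup_lt_iff (by norm_num : (⊥ : NNReal) < 1)]
      intro μ hμ
      rw [Set.Finite.mem_toFinset] at hμ
      have := hA μ hμ
      exact_mod_cast this
    have hle : spectralRadius ℂ B ≤ (c : ENNReal) := by
      rw [spectralRadius]
      refine iSup₂_le fun μ hμ => ?_
      exact_mod_cast Finset.le_sup (hfin.mem_toFinset.mpr hμ)
    refine lt_of_le_of_lt hle ?_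
    exact_mod_cast hc1
  -- choose ρ between spectralRadius and 1
  obtain ⟨ρ, hρ₁, hρ₂⟩ := exists_between hrad
  have hρtop : ρ ≠ ⊤ := ne_top_of_lt (lt_of_lt_of_le hρ₂ le_top)
  set r : NNReal := ρ.toNNReal with hr
  have hρr : ρ = (r : ENNReal) := (ENNReal.coe_toNNReal hρtop).symm
  have hr1 : r < 1 := by
    rw [hρr] at hρ₂; exact_mod_cast hρ₂
  -- Gelfand: eventually ‖B^n‖₊^(1/n) < ρ
  have hG := spectrum.pow_nnnorm_pow_one_div_tendsto_nhds_spectralRadius B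
  have hev : ∀ᶠ n : ℕ in atTop, ((‖B ^ n‖₊ : ENNReal) ^ (1 / (n : ℝ))) < ρ :=
    hG.eventually_lt_const hρ₁
  rw [eventually_atTop] at hev
  obtain ⟨N, hN⟩ := hev
  refine ⟨r, max N 1, r.coe_nonneg, by exact_mod_cast hr1, fun n hn => ?_⟩
  have hnN : n ≥ N := le_trans (le_max_left _ _) hn
  have hn1 : 1 ≤ n := le_trans (le_max_right _ _) hn
  have hn0 : (n : ℝ) ≠ 0 := by positivity
  -- from (‖B^n‖₊)^(1/n) ≤ ρ deduce ‖B^n‖₊ ≤ ρ^n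
  have h1 : ((‖B ^ n‖₊ : ENNReal) ^ (1 / (n : ℝ))) ≤ (r : ENNReal) :=
    le_of_lt (hρr ▸ hN n hnN)
  have h2 : (‖B ^ n‖₊ : ENNReal) ≤ (r : ENNReal) ^ n := by
    have h2' := ENNReal.rpow_le_rpow h1 (le_of_lt (by positivity : (0:ℝ) < (n:ℝ)))
    rwa [← ENNReal.rpow_mul, one_div_mul_cancel hn0, ENNReal.rpow_one,
      ENNReal.rpow_natCast] at h2'
  have h3 : ‖B ^ n‖₊ ≤ r ^ n := by exact_mod_cast h2
  -- relate norms of A^n and B^n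
  have hmap : B ^ n = (A ^ n).map (Complex.ofReal ·) := by
    have : B = (Complex.ofRealHom.mapMatrix : Matrix (Fin p) (Fin p) ℝ →+* _) A := rfl
    rw [this, ← map_pow]; rfl
  have hnorm : ‖A ^ n‖ = ‖B ^ n‖ := by
    rw [hmap]
    exact (Matrix.frobenius_norm_map_eq (A ^ n) _ fun a => Complex.norm_real a).symm
  rw [hnorm]
  calc ‖B ^ n‖ ≤ ((r : ℝ) ^ n) := by exact_mod_cast h3
  _ = (r : ℝ) ^ n := by norm_num

/-- If all complex eigenvalues of `A` have modulus `< 1`, then any two solutions of the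
equation `Γ = A Γ Aᵀ + Om` coincide; hence the equation has exactly one solution, namely
the sum of the series `Σ_k A^k Om (Aᵀ)^k`. -/
theorem lyapunov_solution_unique {p : ℕ} (A Om Γ₁ Γ₂ : Matrix (Fin p) (Fin p) ℝ)
    (hA : ∀ μ : ℂ, μ ∈ spectrum ℂ (A.map (Complex.ofReal ·)) → ‖μ‖ < 1)
    (h₁ : Γ₁ = A * Γ₁ * Aᵀ + Om) (h₂ : Γ₂ = A * Γ₂ * Aᵀ + Om) :
    Γ₁ = Γ₂ ∧
      ∀ Γ : Matrix (Fin p) (Fin p) ℝ, Γ = A * Γ * Aᵀ + Om →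
        HasSum (fun k : ℕ => A ^ k * Om * Aᵀ ^ k) Γ := by
  obtain ⟨r, N, hr0, hr1, hbd⟩ := pow_norm_geo_decay A hA
  set f : ℕ → Matrix (Fin p) (Fin p) ℝ := fun k => A ^ k * Om * Aᵀ ^ k with hf
  -- norm bound on f
  have hAT : ∀ n : ℕ, ‖Aᵀ ^ n‖ = ‖A ^ n‖ := fun n => by
    rw [← Matrix.transpose_pow, Matrix.frobenius_norm_transpose]
  have hfb : ∀ X : Matrix (Fin p) (Fin p) ℝ, ∀ n : ℕ,
      ‖A ^ n * X * Aᵀ ^ n‖ ≤ ‖A ^ n‖ * ‖X‖ * ‖A ^ n‖ := by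
    intro X n
    calc ‖A ^ n * X * Aᵀ ^ n‖ ≤ ‖A ^ n * X‖ * ‖Aᵀ ^ n‖ := norm_mul_le _ _
      _ ≤ ‖A ^ n‖ * ‖X‖ * ‖Aᵀ ^ n‖ :=
          mul_le_mul_of_nonneg_right (norm_mul_le _ _) (norm_nonneg _)
      _ = ‖A ^ n‖ * ‖X‖ * ‖A ^ n‖ := by rw [hAT]
  have hmul : ∀ (X : Matrix (Fin p) (Fin p) ℝ) (n : ℕ), n ≥ N →
      ‖A ^ n‖ * ‖X‖ * ‖A ^ n‖ ≤ r ^ n * ‖X‖ * r ^ n := by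
    intro X n hn
    have h2 := hbd n hn
    have h4 : (0:ℝ) ≤ r ^ n := pow_nonneg hr0 n
    exact mul_le_mul (mul_le_mul_of_nonneg_right h2 (norm_nonneg X)) h2 (norm_nonneg _)
      (by positivity)
  -- summability
  have hsum : Summable f := by
    refine Summable.of_norm_bounded_eventually_nat (g := fun n => (r ^ 2) ^ n * ‖Om‖) ?_ ?_
    · exact (summable_geometric_of_lt_one (by positivity) (by nlinarith)).mul_right _
    · rw [eventually_atTop]
      refine ⟨N, fun n hn => ?_⟩
      calc ‖f n‖ ≤ r ^ n * ‖Om‖ * r ^ n := le_trans (hfb Om n) (hmul Om n hn)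
        _ = (r ^ 2) ^ n * ‖Om‖ := by ring
  -- tail tends to zero
  have htail : ∀ X : Matrix (Fin p) (Fin p) ℝ,
      Tendsto (fun n => A ^ n * X * Aᵀ ^ n) atTop (𝓝 0) := by
    intro X
    have hg : Tendsto (fun n : ℕ => (r ^ 2) ^ n * ‖X‖) atTop (𝓝 0) := by
      simpa using
        (tendsto_pow_atTop_nhds_zero_of_lt_one (by positivity) (by nlinarith)).mul_const ‖X‖
    refine squeeze_zero_norm' ?_ hg
    rw [eventually_atTop]
    refine ⟨N, fun n hn => ?_⟩
    calc ‖A ^ n * X * Aᵀ ^ n‖ ≤ r ^ n * ‖X‖ * r ^ n := le_trans (hfb X n) (hmul X n hn)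
      _ = (r ^ 2) ^ n * ‖X‖ := by ring
  -- main claim
  have key : ∀ Γ : Matrix (Fin p) (Fin p) ℝ, Γ = A * Γ * Aᵀ + Om → HasSum f Γ := by
    intro Γ hΓ
    -- partial sums
    have hpartial : ∀ n : ℕ, ∑ k ∈ Finset.range n, f k = Γ - A ^ n * Γ * Aᵀ ^ n := by
      intro n
      induction n with
      | zero => simp
      | succ n ih =>
        rw [Finset.sum_range_succ, ih]
        have hstep : A ^ n * Γ * Aᵀ ^ n
            = A ^ (n + 1) * Γ * Aᵀ ^ (n + 1) + A ^ n * Om * Aᵀ ^ n := by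
          conv_lhs => rw [hΓ]
          rw [pow_succ, pow_succ']
          noncomm_ring
        rw [hstep, hf]
        abel
    have hT : Tendsto (fun n => ∑ k ∈ Finset.range n, f k) atTop (𝓝 Γ) := by
      have : Tendsto (fun n => Γ - A ^ n * Γ * Aᵀ ^ n) atTop (𝓝 (Γ - 0)) :=
        tendsto_const_nhds.sub (htail Γ)
      rw [sub_zero] at this
      exact this.congr fun n => (hpartial n).symm
    have hT' := hsum.hasSum.tendsto_sum_nat
    have : ∑' k, f k = Γ := tendsto_nhds_unique hT' hT
    exact this ▸ hsum.hasSum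
  exact ⟨(key Γ₁ h₁).unique (key Γ₂ h₂), key⟩
end

section
/- Let α₁, …, α_p ∈ ℝ and let A be the p × p companion matrix with 1's on the superdiagonal, last row (α_p, …, α₁), and zeros elsewhere, and assume all complex eigenvalues of A have modulus strictly less than 1. Let σ² > 0 and let Ω = σ² e_p e_pᵀ, where e_p is the p-th standard basis vector of ℝ^p (so Ω has single nonzero entry σ² in position (p,p)). Then the matrix Γ = Σ_{k=0}^∞ A^k Ω (Aᵀ)^k is symmetric positive definite. -/
open Matrix

attribute [local instance] Matrix.frobeniusNormedAddCommGroup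

/-- The `p × p` companion matrix of `(α₁, …, α_p)` (here `α i` denotes `α_{i+1}`):
ones on the superdiagonal, last row `(α_p, α_{p-1}, …, α₁)`, zeros elsewhere. -/
def companionMatrix {p : ℕ} (α : Fin p → ℝ) : Matrix (Fin p) (Fin p) ℝ :=
  Matrix.of fun i j =>
    if (i : ℕ) + 1 = (j : ℕ) then 1
    else if (i : ℕ) = p - 1 then α ⟨p - 1 - (j : ℕ), by omega⟩
    else 0

section aux

variable {p : ℕ} (α : Fin p → ℝ)

/-- key structure of `A^k *ᵥ e_p`. -/
lemma companion_pow_single (hp : 1 ≤ p) (k : ℕ) (hk : k < p) :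
    ((companionMatrix α ^ k) *ᵥ Pi.single (⟨p - 1, Nat.sub_lt hp Nat.one_pos⟩ : Fin p) 1)
        ⟨p - 1 - k, by omega⟩ = 1 ∧
    ∀ i : Fin p, (i : ℕ) < p - 1 - k →
      ((companionMatrix α ^ k) *ᵥ Pi.single (⟨p - 1, Nat.sub_lt hp Nat.one_pos⟩ : Fin p) 1) i = 0 := by
  induction k with
  | zero =>
    constructor
    · simp [Pi.single_apply]
    · intro i hi
      simp only [pow_zero, one_mulVec, Pi.single_apply]
      rw [if_neg]
      intro h
      rw [h] at hi
      simp at hi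
  | succ k ih =>
    have ihk := ih (by omega)
    set v := (companionMatrix α ^ k) *ᵥ Pi.single (⟨p - 1, Nat.sub_lt hp Nat.one_pos⟩ : Fin p) 1 with hv
    have hstep : (companionMatrix α ^ (k + 1)) *ᵥ Pi.single (⟨p - 1, Nat.sub_lt hp Nat.one_pos⟩ : Fin p) 1
        = companionMatrix α *ᵥ v := by
      rw [pow_succ', ← mulVec_mulVec]
    have hrow : ∀ (i : Fin p) (hi : (i : ℕ) < p - 1),
        (companionMatrix α *ᵥ v) i = v ⟨(i : ℕ) + 1, by omega⟩ := by
      intro i hi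
      show (∑ j, companionMatrix α i j * v j) = _
      rw [Finset.sum_eq_single (⟨(i : ℕ) + 1, by omega⟩ : Fin p)]
      · simp [companionMatrix]
      · intro j _ hj
        have : ¬ ((i : ℕ) + 1 = (j : ℕ)) := by
          intro h; apply hj; exact Fin.ext h.symm
        simp only [companionMatrix, Matrix.of_apply, if_neg this,
          if_neg (by omega : ¬ (i : ℕ) = p - 1), zero_mul]
      · simp
    constructor
    · rw [hstep, hrow ⟨p - 1 - (k+1), by omega⟩ (by simp only [Fin.val_mk]; omega)]
      have h5 : (⟨(p - 1 - (k+1) : ℕ) + 1, by omega⟩ : Fin p) = ⟨p - 1 - k, by omega⟩ :=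
        Fin.ext (by simp only [Fin.val_mk]; omega)
      rw [h5]
      exact ihk.1
    · intro i hi
      rw [hstep, hrow i (by omega)]
      exact ihk.2 _ (by simp only [Fin.val_mk]; omega)

lemma companion_controllable (hp : 1 ≤ p) (x : Fin p → ℝ)
    (hx : ∀ k : ℕ, x ⬝ᵥ ((companionMatrix α ^ k) *ᵥ Pi.single (⟨p - 1, Nat.sub_lt hp Nat.one_pos⟩ : Fin p) 1) = 0) :
    x = 0 := by
  -- show x ⟨p-1-k⟩ = 0 by strong induction on k
  have key : ∀ k : ℕ, k < p → x ⟨p - 1 - k, by omega⟩ = 0 := by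
    intro k
    induction k using Nat.strong_induction_on with
    | _ k ih =>
      intro hk
      have hzero : ∀ i : Fin p, p - 1 - k < (i : ℕ) → x i = 0 := by
        intro i hi
        have hk' : p - 1 - (p - 1 - (i : ℕ)) = (i : ℕ) := by omega
        have := ih (p - 1 - (i : ℕ)) (by omega) (by omega)
        convert this using 2
        exact Fin.ext hk'.symm
      have hsum := hx k
      have hc := companion_pow_single α hp k hk
      set v := (companionMatrix α ^ k) *ᵥ Pi.single (⟨p - 1, Nat.sub_lt hp Nat.one_pos⟩ : Fin p) 1 with hv
      have : x ⬝ᵥ v = x ⟨p - 1 - k, by omega⟩ := by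
        show (∑ i, x i * v i) = _
        rw [Finset.sum_eq_single (⟨p - 1 - k, by omega⟩ : Fin p)]
        · rw [hc.1]; ring
        · intro j _ hj
          rcases lt_or_gt_of_ne (fun h : (j:ℕ) = p-1-k => hj (Fin.ext h)) with h | h
          · rw [hc.2 j h, mul_zero]
          · rw [hzero j h, zero_mul]
        · simp
      rw [this] at hsum
      exact hsum
  funext i
  have h2 : (⟨p - 1 - (p - 1 - (i : ℕ)), by omega⟩ : Fin p) = i :=
    Fin.ext (by simp only [Fin.val_mk]; omega)
  have := key (p - 1 - (i : ℕ)) (by omega)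
  rw [h2] at this
  exact this

end aux

/-- If all complex eigenvalues of the companion matrix `A` have modulus `< 1`, `σ² > 0` and
`Om = σ² eₚ eₚᵀ`, then the sum `Γ` of the series `Σ_k A^k Om (Aᵀ)^k` is a symmetric
positive definite matrix. -/
theorem lyapunov_companion_posDef {p : ℕ} (hp : 1 ≤ p) (α : Fin p → ℝ)
    (A : Matrix (Fin p) (Fin p) ℝ) (hAdef : A = companionMatrix α)
    (hA : ∀ μ : ℂ, μ ∈ spectrum ℂ (A.map (Complex.ofReal ·)) → ‖μ‖ < 1)
    (σsq : ℝ) (hσ : 0 < σsq)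
    (Om : Matrix (Fin p) (Fin p) ℝ)
    (hOm : Om = Matrix.single (⟨p - 1, by omega⟩ : Fin p) (⟨p - 1, by omega⟩ : Fin p) σsq)
    (Γ : Matrix (Fin p) (Fin p) ℝ)
    (hΓ : HasSum (fun k : ℕ => A ^ k * Om * Aᵀ ^ k) Γ) :
    Γ.IsSymm ∧ Γ.PosDef := by
  set e : Fin p := ⟨p - 1, by omega⟩
  have hOmSymm : Omᵀ = Om := by
    rw [hOm]
    ext i j
    simp [Matrix.single, Matrix.transpose_apply, and_comm]
  -- symmetry
  have hsymm : Γᵀ = Γ := by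
    have hT : HasSum (fun k : ℕ => (A ^ k * Om * Aᵀ ^ k)ᵀ) Γᵀ := by
      have : Continuous (fun M : Matrix (Fin p) (Fin p) ℝ => Mᵀ) :=
        LinearMap.continuous_of_finiteDimensional
          (Matrix.transposeLinearEquiv (Fin p) (Fin p) ℝ ℝ).toLinearMap
      exact hΓ.map (Matrix.transposeAddEquiv (Fin p) (Fin p) ℝ).toAddMonoidHom this
    have heq : (fun k : ℕ => (A ^ k * Om * Aᵀ ^ k)ᵀ) = fun k : ℕ => A ^ k * Om * Aᵀ ^ k := by
      funext k
      rw [Matrix.transpose_mul, Matrix.transpose_mul, hOmSymm, Matrix.transpose_pow,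
        Matrix.transpose_pow, Matrix.transpose_transpose, mul_assoc]
    rw [heq] at hT
    exact hT.unique hΓ
  refine ⟨hsymm, Matrix.PosDef.of_dotProduct_mulVec_pos (by rwa [Matrix.IsHermitian, Matrix.conjTranspose_eq_transpose_of_trivial]) ?_⟩
  intro x hx
  -- quadratic form as a sum
  have hquad : HasSum (fun k : ℕ => x ⬝ᵥ ((A ^ k * Om * Aᵀ ^ k) *ᵥ x)) (x ⬝ᵥ (Γ *ᵥ x)) := by
    let f : Matrix (Fin p) (Fin p) ℝ →ₗ[ℝ] ℝ :=
      { toFun := fun M => x ⬝ᵥ (M *ᵥ x)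
        map_add' := by intro M N; simp [Matrix.add_mulVec, dotProduct_add]
        map_smul' := by intro c M; simp [Matrix.smul_mulVec, dotProduct_smul] }
    exact hΓ.map f.toAddMonoidHom f.continuous_of_finiteDimensional
  -- each term equals σsq * (x ⬝ᵥ A^k e)^2
  have hterm : ∀ k : ℕ, x ⬝ᵥ ((A ^ k * Om * Aᵀ ^ k) *ᵥ x)
      = σsq * (x ⬝ᵥ ((A ^ k) *ᵥ Pi.single e 1))^2 := by
    intro k
    have h1 : (A ^ k * Om * Aᵀ ^ k) *ᵥ x = A ^ k *ᵥ (Om *ᵥ ((Aᵀ ^ k) *ᵥ x)) := by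
      rw [mulVec_mulVec, mulVec_mulVec, mul_assoc]
    rw [h1]
    rw [Matrix.dotProduct_mulVec, ← Matrix.mulVec_transpose, Matrix.transpose_pow]
    set u := (Aᵀ ^ k) *ᵥ x with hu
    have h2 : Om *ᵥ u = fun i => if i = e then σsq * u e else 0 := by
      funext i
      show (∑ j, Om i j * u j) = _
      rw [hOm]
      by_cases hi : i = e
      · subst hi
        rw [Finset.sum_eq_single e]
        · simp [Matrix.single]
        · intro j _ hj; simp [Matrix.single, Ne.symm hj]
        · simp
      · rw [if_neg hi]
        apply Finset.sum_eq_zero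
        intro j _
        simp only [Matrix.single, Matrix.of_apply]
        rw [if_neg (by rintro ⟨h1, h2⟩; simp_all), zero_mul]
    rw [h2]
    have h3 : u ⬝ᵥ (fun i => if i = e then σsq * u e else 0) = σsq * (u e)^2 := by
      show (∑ i, u i * _) = _
      rw [Finset.sum_eq_single e]
      · simp; ring
      · intro j _ hj; simp [hj]
      · simp
    rw [h3]
    congr 2
    -- u e = x ⬝ᵥ (A^k *ᵥ single e 1)
    have hcol : ∀ i : Fin p, ((A ^ k) *ᵥ Pi.single e 1) i = (A ^ k) i e := by
      intro i
      show (∑ j, (A ^ k) i j * (Pi.single e 1 : Fin p → ℝ) j) = _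
      rw [Finset.sum_eq_single e]
      · simp
      · intro j _ hj; simp [Pi.single_apply, hj]
      · simp
    show ((Aᵀ ^ k) *ᵥ x) e = _
    rw [← Matrix.transpose_pow, Matrix.mulVec_transpose]
    show (∑ i, x i * (A ^ k) i e) = ∑ i, x i * ((A ^ k) *ᵥ Pi.single e 1) i
    exact Finset.sum_congr rfl fun i _ => by rw [hcol i]
  have hnonneg : ∀ k : ℕ, 0 ≤ x ⬝ᵥ ((A ^ k * Om * Aᵀ ^ k) *ᵥ x) := by
    intro k; rw [hterm k]; positivity
  -- some term is positive
  have hxk : ∃ k : ℕ, x ⬝ᵥ ((A ^ k) *ᵥ Pi.single e 1) ≠ 0 := by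
    by_contra h
    push_neg at h
    apply hx
    exact companion_controllable α hp x (by rw [← hAdef]; exact h)
  obtain ⟨k₀, hk₀⟩ := hxk
  have hpos : 0 < x ⬝ᵥ ((A ^ k₀ * Om * Aᵀ ^ k₀) *ᵥ x) := by
    rw [hterm k₀]
    positivity
  have := Summable.tsum_pos hquad.summable hnonneg k₀ hpos
  rw [hquad.tsum_eq] at this
  simpa using this
end

section
/- Let M be an n × n real matrix all of whose complex eigenvalues have modulus strictly less than 1. Then the series Σ_{u=0}^∞ (u+1) M^u converges in the space of n × n real matrices, I − M is invertible, and Σ_{u=0}^∞ (u+1) M^u = ((I − M)^{−1})², i.e. it equals the inverse of (I − M)². -/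
attribute [local instance] Matrix.frobeniusNormedAddCommGroup

attribute [local instance] Matrix.frobeniusNormedRing Matrix.frobeniusNormedAlgebra

set_option maxHeartbeats 4000000

open Filter Finset
open scoped Topology

lemma neumann_pow_bound {N : ℕ} [NeZero N] (A : Matrix (Fin N) (Fin N) ℂ)
    (h : ∀ μ ∈ spectrum ℂ A, ‖μ‖ < 1) :
    ∃ r : ℝ, 0 ≤ r ∧ r < 1 ∧ ∀ᶠ k in atTop, ‖A ^ k‖ ≤ r ^ k := by
  have hrad : spectralRadius ℂ A < 1 := by
    have := spectrum.spectralRadius_lt_of_forall_lt A (r := 1) (fun z hz => by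
      have : ‖z‖ < 1 := by simpa using h z hz
      exact_mod_cast this)
    simpa using this
  obtain ⟨r, hr1, hr2⟩ := ENNReal.lt_iff_exists_nnreal_btwn.mp hrad
  have hr2' : (r : ℝ) < 1 := by exact_mod_cast (by exact_mod_cast hr2 : (r : ENNReal) < 1)
  refine ⟨r, r.coe_nonneg, hr2', ?_⟩
  have hg := spectrum.pow_nnnorm_pow_one_div_tendsto_nhds_spectralRadius A
  have hev : ∀ᶠ k in atTop, (‖A ^ k‖₊ : ENNReal) ^ (1 / (k:ℕ) : ℝ) < (r : ENNReal) :=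
    hg.eventually_lt_const hr1
  filter_upwards [hev, eventually_ge_atTop 1] with k hk hk1
  have hkne : (k : ℝ) ≠ 0 := by positivity
  have : ((‖A ^ k‖₊ : ENNReal) ^ (1 / (k:ℕ) : ℝ)) ^ (k : ℝ) ≤ (r : ENNReal) ^ (k : ℝ) :=
    ENNReal.rpow_le_rpow hk.le (by positivity)
  rw [← ENNReal.rpow_mul, one_div_mul_cancel hkne, ENNReal.rpow_one,
      ENNReal.rpow_natCast] at this
  have h2 : ‖A ^ k‖₊ ≤ r ^ k := by exact_mod_cast this
  calc ‖A ^ k‖ = (‖A ^ k‖₊ : ℝ) := rfl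
    _ ≤ ((r ^ k : NNReal) : ℝ) := by exact_mod_cast h2
    _ = (r : ℝ) ^ k := by push_cast; ring


/-- If all complex eigenvalues of the real matrix `M` have modulus `< 1`, then the series
`Σ_u (u+1) M^u` converges, `I - M` is invertible, and the sum equals `((I - M)⁻¹)²`,
i.e. the inverse of `(I - M)²`. -/
theorem neumann_series_sq {n : ℕ} (M : Matrix (Fin n) (Fin n) ℝ)
    (hM : ∀ μ : ℂ, μ ∈ spectrum ℂ (M.map (Complex.ofReal ·)) → ‖μ‖ < 1) :
    (Summable fun u : ℕ => ((u : ℝ) + 1) • M ^ u) ∧ IsUnit (1 - M) ∧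
      ∑' u : ℕ, ((u : ℝ) + 1) • M ^ u = ((1 - M)⁻¹) ^ 2 := by
  rcases Nat.eq_zero_or_pos n with hn | hn
  · subst hn
    have hsub : ∀ x y : Matrix (Fin 0) (Fin 0) ℝ, x = y := fun x y => by
      ext i; exact i.elim0
    exact ⟨summable_zero.congr fun b => hsub 0 _,
      ⟨⟨1 - M, 1, hsub _ _, hsub _ _⟩, rfl⟩, hsub _ _⟩
  haveI : NeZero n := ⟨hn.ne'⟩
  set A : Matrix (Fin n) (Fin n) ℂ := M.map (Complex.ofReal ·) with hA
  obtain ⟨r, hr0, hr1, hev⟩ := neumann_pow_bound A hM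
  -- norms of powers
  have hpow : ∀ k : ℕ, ‖M ^ k‖ = ‖A ^ k‖ := by
    intro k
    have : A ^ k = (M ^ k).map (Complex.ofReal ·) := by
      have : A = Complex.ofRealHom.mapMatrix M := rfl
      rw [this, ← map_pow]; rfl
    rw [this, Matrix.frobenius_norm_map_eq _ _ (fun a => Complex.norm_real a)]
  have hevM : ∀ᶠ k in atTop, ‖M ^ k‖ ≤ r ^ k := by
    filter_upwards [hev] with k hk; rw [hpow]; exact hk
  -- summability of norms of powers
  have hnormsum : Summable fun u : ℕ => ‖M ^ u‖ := by
    refine Summable.of_norm_bounded_eventually_nat (g := fun u => r ^ u)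
      (summable_geometric_of_lt_one hr0 hr1) ?_
    filter_upwards [hevM] with k hk; rwa [norm_norm]
  have hsumM : Summable fun u : ℕ => M ^ u := hnormsum.of_norm
  have hshift : Summable fun u : ℕ => ‖M ^ (u + 1)‖ :=
    (summable_nat_add_iff 1).2 hnormsum
  have htend0 : Tendsto (fun k : ℕ => M ^ k) atTop (𝓝 0) :=
    squeeze_zero_norm' hevM (tendsto_pow_atTop_nhds_zero_of_lt_one hr0 hr1)
  set S : Matrix (Fin n) (Fin n) ℝ := ∑' u : ℕ, M ^ u with hS
  -- telescoping sum
  have hdiff : Summable fun u : ℕ => ‖M ^ u - M ^ (u + 1)‖ :=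
    Summable.of_nonneg_of_le (fun _ => norm_nonneg _) (fun u => norm_sub_le _ _)
      (hnormsum.add hshift)
  have h1 : HasSum (fun u : ℕ => M ^ u - M ^ (u + 1)) 1 := by
    refine (hasSum_iff_tendsto_nat_of_summable_norm hdiff).mpr ?_
    have : ∀ N : ℕ, ∑ u ∈ range N, (M ^ u - M ^ (u + 1)) = 1 - M ^ N := by
      intro N; rw [Finset.sum_range_sub' (fun u => M ^ u)]; simp
    simp only [this]
    exact (by simpa using tendsto_const_nhds.sub htend0 : Tendsto (fun k : ℕ => 1 - M ^ k) atTop (𝓝 1))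
  have hleft : (1 - M) * S = 1 := by
    rw [hS, ← hsumM.tsum_mul_left (1 - M),
      show (fun u : ℕ => (1 - M) * M ^ u) = fun u : ℕ => M ^ u - M ^ (u + 1) from
        funext fun u => by rw [sub_mul, one_mul, ← pow_succ'], h1.tsum_eq]
  have hright : S * (1 - M) = 1 := by
    rw [hS, ← hsumM.tsum_mul_right (1 - M),
      show (fun u : ℕ => M ^ u * (1 - M)) = fun u : ℕ => M ^ u - M ^ (u + 1) from
        funext fun u => by rw [mul_sub, mul_one, ← pow_succ], h1.tsum_eq]
  have hunit : IsUnit (1 - M) := ⟨⟨1 - M, S, hleft, hright⟩, rfl⟩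
  have hinv : (1 - M)⁻¹ = S := Matrix.inv_eq_right_inv hleft
  -- summability of the main series
  have hgsum : Summable fun u : ℕ => ((u : ℝ) + 1) * r ^ u := by
    have h1' : Summable fun u : ℕ => (u : ℝ) ^ 1 * r ^ u :=
      summable_pow_mul_geometric_of_norm_lt_one 1 (by rwa [Real.norm_eq_abs, abs_of_nonneg hr0])
    refine ((h1'.add (summable_geometric_of_lt_one hr0 hr1)).congr fun u => ?_)
    ring
  have hmain : Summable fun u : ℕ => ((u : ℝ) + 1) • M ^ u := by
    refine Summable.of_norm_bounded_eventually_nat (g := fun u => ((u : ℝ) + 1) * r ^ u) hgsum ?_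
    filter_upwards [hevM] with k hk
    rw [norm_smul, Real.norm_eq_abs, abs_of_nonneg (by positivity)]
    exact mul_le_mul_of_nonneg_left hk (by positivity)
  refine ⟨hmain, hunit, ?_⟩
  -- Cauchy product
  have hc := tsum_mul_tsum_eq_tsum_sum_antidiagonal_of_summable_norm
    (f := fun u : ℕ => M ^ u) (g := fun u : ℕ => M ^ u) hnormsum hnormsum
  have hterm : ∀ u : ℕ, ∑ kl ∈ antidiagonal u, M ^ kl.1 * M ^ kl.2 = ((u : ℝ) + 1) • M ^ u := by
    intro u
    have : ∀ kl ∈ antidiagonal u, M ^ kl.1 * M ^ kl.2 = M ^ u := by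
      intro kl hkl
      rw [← pow_add, Finset.HasAntidiagonal.mem_antidiagonal.mp hkl]
    rw [Finset.sum_congr rfl this, Finset.sum_const, Finset.Nat.card_antidiagonal]
    rw [← Nat.cast_smul_eq_nsmul ℝ (u + 1) (M ^ u)]
    push_cast; ring_nf
  calc ∑' u : ℕ, ((u : ℝ) + 1) • M ^ u
      = ∑' u : ℕ, ∑ kl ∈ antidiagonal u, M ^ kl.1 * M ^ kl.2 := by
        simp_rw [hterm]
    _ = S * S := hc.symm
    _ = ((1 - M)⁻¹) ^ 2 := by rw [hinv, sq]
end

section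
/- Let (S, 𝓕, P) be a probability space and A : S → (p × p real matrices) measurable with ‖A(ω)‖ ≤ r < 1 for P-almost every ω in Frobenius norm, and let Ω₀ be a symmetric p × p real matrix. For P-a.e. ω let Γ(ω) be the unique solution of Γ(ω) = A(ω) Γ(ω) A(ω)ᵀ + Ω₀; define Υ(u) = E[A^u Γ] for integers u ≥ 0 and Υ(−u) = Υ(u)ᵀ for u ≥ 1. Then the doubly infinite series Σ_{u=−∞}^{∞} vec(Υ(u)) converges absolutely in ℝ^{p²} and equals Σ_{v=0}^∞ E[(A ⊗ A)^v] vec(Ω₀) + Σ_{u=1}^∞ Σ_{v=0}^∞ ( E[A^v ⊗ A^{v+u}] + E[A^{v+u} ⊗ A^v] ) vec(Ω₀). (Up to the factor 1/(2π), this is the vectorized spectral density of the stationary process at frequency λ = 0.) -/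
open MeasureTheory Kronecker Matrix

attribute [local instance] Matrix.frobeniusNormedAddCommGroup Matrix.frobeniusNormedSpace

noncomputable instance {m n : Type*} : MeasurableSpace (Matrix m n ℝ) :=
  inferInstanceAs (MeasurableSpace (m → n → ℝ))

instance {m n : Type*} [Fintype m] [Fintype n] : BorelSpace (Matrix m n ℝ) :=
  inferInstanceAs (BorelSpace (m → n → ℝ))

/-- Column-stacking vectorization: the index `(j, i)` refers to the entry of `M`
in column `j` and row `i`. -/
def Matrix.vecCol {p : ℕ} (M : Matrix (Fin p) (Fin p) ℝ) : Fin p × Fin p → ℝ :=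
  fun q => M q.2 q.1

lemma entry_le_frob {m n : Type*} [Fintype m] [Fintype n] (M : Matrix m n ℝ) (i : m) (j : n) :
    ‖M i j‖ ≤ ‖M‖ := by
  rw [Matrix.frobenius_norm_def]
  have h1 : ‖M i j‖ ^ (2:ℝ) ≤ ∑ i', ∑ j', ‖M i' j'‖ ^ (2:ℝ) := by
    calc ‖M i j‖ ^ (2:ℝ) ≤ ∑ j', ‖M i j'‖ ^ (2:ℝ) :=
          Finset.single_le_sum (fun k _ => Real.rpow_nonneg (norm_nonneg _) _)
            (Finset.mem_univ j)
      _ ≤ _ := Finset.single_le_sum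
            (fun k _ => Finset.sum_nonneg fun l _ => Real.rpow_nonneg (norm_nonneg _) _)
            (Finset.mem_univ i)
  have h2 : ‖M i j‖ = (‖M i j‖ ^ (2:ℝ)) ^ (1/2:ℝ) := by
    rw [← Real.rpow_mul (norm_nonneg _)]
    norm_num
  rw [h2]
  exact Real.rpow_le_rpow (Real.rpow_nonneg (norm_nonneg _) _) h1 (by norm_num)

lemma vecCol_norm_le {p : ℕ} (M : Matrix (Fin p) (Fin p) ℝ) : ‖M.vecCol‖ ≤ ‖M‖ := by
  refine (pi_norm_le_iff_of_nonneg (norm_nonneg M)).mpr fun q => ?_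
  exact entry_le_frob M q.2 q.1

lemma kron_nnnorm {l m n o : Type*} [Fintype l] [Fintype m] [Fintype n] [Fintype o]
    (A : Matrix l m ℝ) (B : Matrix n o ℝ) : ‖A ⊗ₖ B‖₊ = ‖A‖₊ * ‖B‖₊ := by
  rw [Matrix.frobenius_nnnorm_def, Matrix.frobenius_nnnorm_def, Matrix.frobenius_nnnorm_def,
    ← NNReal.mul_rpow]
  congr 1
  rw [Fintype.sum_prod_type]
  simp_rw [Fintype.sum_prod_type, Matrix.kroneckerMap_apply, nnnorm_mul, NNReal.mul_rpow]
  simp_rw [← Finset.mul_sum, ← Finset.sum_mul]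
  rw [Finset.sum_mul_sum]

lemma kron_norm {l m n o : Type*} [Fintype l] [Fintype m] [Fintype n] [Fintype o]
    (A : Matrix l m ℝ) (B : Matrix n o ℝ) : ‖A ⊗ₖ B‖ = ‖A‖ * ‖B‖ :=
  congrArg NNReal.toReal (kron_nnnorm A B)

lemma vecCol_mulVec {p : ℕ} (Bm Am X : Matrix (Fin p) (Fin p) ℝ) :
    (Bm ⊗ₖ Am).mulVec X.vecCol = (Am * X * Bmᵀ).vecCol := by
  funext q
  obtain ⟨j, i⟩ := q
  simp only [Matrix.mulVec, dotProduct, Matrix.vecCol, Matrix.kroneckerMap_apply,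
    Matrix.mul_apply, Matrix.transpose_apply, Fintype.sum_prod_type]
  simp_rw [Finset.sum_mul]
  exact Finset.sum_congr rfl fun l _ => Finset.sum_congr rfl fun k _ => by ring

lemma kron_pow {p : ℕ} (A B : Matrix (Fin p) (Fin p) ℝ) (n : ℕ) :
    (A ⊗ₖ B) ^ n = (A ^ n) ⊗ₖ (B ^ n) := by
  induction n with
  | zero => simp [Matrix.one_kronecker_one]
  | succ n ih => rw [pow_succ, pow_succ, pow_succ, ih, ← Matrix.mul_kronecker_mul]
section CLM
variable {p : ℕ}

noncomputable def vecColL : Matrix (Fin p) (Fin p) ℝ →L[ℝ] (Fin p × Fin p → ℝ) :=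
  LinearMap.toContinuousLinearMap
    { toFun := Matrix.vecCol
      map_add' := fun _ _ => rfl
      map_smul' := fun _ _ => rfl }

@[simp] lemma vecColL_apply (M : Matrix (Fin p) (Fin p) ℝ) : vecColL M = M.vecCol := rfl

noncomputable def mulVecL (x : Fin p × Fin p → ℝ) :
    Matrix (Fin p × Fin p) (Fin p × Fin p) ℝ →L[ℝ] (Fin p × Fin p → ℝ) :=
  LinearMap.toContinuousLinearMap
    { toFun := fun N => N.mulVec x
      map_add' := fun _ _ => Matrix.add_mulVec _ _ _
      map_smul' := fun c N => Matrix.smul_mulVec c N x }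

@[simp] lemma mulVecL_apply (x : Fin p × Fin p → ℝ) (N : Matrix (Fin p × Fin p) (Fin p × Fin p) ℝ) :
    mulVecL x N = N.mulVec x := rfl

noncomputable def mulLeftL (B : Matrix (Fin p) (Fin p) ℝ) :
    Matrix (Fin p) (Fin p) ℝ →L[ℝ] Matrix (Fin p) (Fin p) ℝ :=
  LinearMap.toContinuousLinearMap (LinearMap.mulLeft ℝ B)

@[simp] lemma mulLeftL_apply (B X : Matrix (Fin p) (Fin p) ℝ) : mulLeftL B X = B * X := rfl

noncomputable def transposeL :
    Matrix (Fin p) (Fin p) ℝ →L[ℝ] Matrix (Fin p) (Fin p) ℝ :=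
  LinearMap.toContinuousLinearMap
    { toFun := Matrix.transpose
      map_add' := fun _ _ => Matrix.transpose_add _ _
      map_smul' := fun c M => Matrix.transpose_smul c M }

@[simp] lemma transposeL_apply (M : Matrix (Fin p) (Fin p) ℝ) : transposeL M = Mᵀ := rfl

end CLM

section Meas
variable {S : Type*} [MeasurableSpace S]

lemma measurable_entry {m n : Type*} {f : S → Matrix m n ℝ} (hf : Measurable f) (i : m) (j : n) :
    Measurable fun ω => f ω i j :=
  (measurable_pi_apply j).comp ((measurable_pi_apply i).comp hf)

lemma measurable_of_entries {m n : Type*} {f : S → Matrix m n ℝ}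
    (h : ∀ i j, Measurable fun ω => f ω i j) : Measurable f :=
  measurable_pi_lambda _ fun i => measurable_pi_lambda _ fun j => h i j

lemma Measurable.matrix_mul' {p : ℕ} {f g : S → Matrix (Fin p) (Fin p) ℝ}
    (hf : Measurable f) (hg : Measurable g) : Measurable fun ω => f ω * g ω := by
  refine measurable_of_entries fun i j => ?_
  simp only [Matrix.mul_apply]
  exact Finset.measurable_sum _ fun k _ =>
    (measurable_entry hf i k).mul (measurable_entry hg k j)

lemma Measurable.matrix_pow {p : ℕ} {f : S → Matrix (Fin p) (Fin p) ℝ}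
    (hf : Measurable f) (n : ℕ) : Measurable fun ω => f ω ^ n := by
  induction n with
  | zero => simpa using measurable_const
  | succ n ih => simpa only [pow_succ] using ih.matrix_mul' hf

lemma Measurable.matrix_transpose {m n : Type*} {f : S → Matrix m n ℝ}
    (hf : Measurable f) : Measurable fun ω => (f ω)ᵀ :=
  measurable_of_entries fun i j => measurable_entry hf j i

lemma Measurable.matrix_kron {p : ℕ} {f g : S → Matrix (Fin p) (Fin p) ℝ}
    (hf : Measurable f) (hg : Measurable g) : Measurable fun ω => f ω ⊗ₖ g ω := by
  refine measurable_of_entries fun i j => ?_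
  exact (measurable_entry hf i.1 j.1).mul (measurable_entry hg i.2 j.2)

lemma Measurable.matrix_vecCol {p : ℕ} {f : S → Matrix (Fin p) (Fin p) ℝ}
    (hf : Measurable f) : Measurable fun ω => (f ω).vecCol :=
  measurable_pi_lambda _ fun q => measurable_entry hf q.2 q.1

lemma Measurable.matrix_mulVec {p : ℕ} {f : S → Matrix (Fin p × Fin p) (Fin p × Fin p) ℝ}
    (hf : Measurable f) (x : Fin p × Fin p → ℝ) : Measurable fun ω => (f ω).mulVec x := by
  refine measurable_pi_lambda _ fun q => ?_
  simp only [Matrix.mulVec, dotProduct]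
  exact Finset.measurable_sum _ fun k _ => (measurable_entry hf q k).mul measurable_const

end Meas

/-- Let `A` be a.e. bounded in Frobenius norm by `r < 1`, `Om0` symmetric, `Γ ω` the (a.e.)
solution of `Γ ω = A ω * Γ ω * (A ω)ᵀ + Om0`, `Υ u = E[A^u Γ]` for `u ≥ 0` and
`Υ (-u) = (Υ u)ᵀ`. Then `Σ_{u ∈ ℤ} vec (Υ u)` converges absolutely and equals
`Σ_v E[(A ⊗ A)^v] vec Om0 + Σ_{u≥1} Σ_v (E[A^v ⊗ A^{v+u}] + E[A^{v+u} ⊗ A^v]) vec Om0`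
(up to the factor `1/(2π)`, the vectorized spectral density at frequency `0`). -/
theorem vec_spectral_density_at_zero {S : Type*} [MeasurableSpace S] (P : Measure S)
    [IsProbabilityMeasure P] {p : ℕ} (A : S → Matrix (Fin p) (Fin p) ℝ)
    (hA : Measurable A) (r : ℝ) (hr : r < 1) (hbound : ∀ᵐ ω ∂P, ‖A ω‖ ≤ r)
    (Om0 : Matrix (Fin p) (Fin p) ℝ) (hOm0 : Om0.IsSymm)
    (Γ : S → Matrix (Fin p) (Fin p) ℝ) (hΓmeas : Measurable Γ)
    (hΓ : ∀ᵐ ω ∂P, Γ ω = A ω * Γ ω * (A ω)ᵀ + Om0)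
    (Υ : ℤ → Matrix (Fin p) (Fin p) ℝ)
    (hΥ : ∀ u : ℕ, Υ (u : ℤ) = ∫ ω, (A ω) ^ u * Γ ω ∂P)
    (hΥneg : ∀ u : ℕ, 1 ≤ u → Υ (-(u : ℤ)) = (Υ (u : ℤ))ᵀ) :
    (Summable fun u : ℤ => ‖(Υ u).vecCol‖) ∧
      ∑' u : ℤ, (Υ u).vecCol =
        (∑' v : ℕ, ∫ ω, ((A ω) ⊗ₖ (A ω)) ^ v ∂P).mulVec Om0.vecCol +
          ∑' u : ℕ, ∑' v : ℕ,
            ((∫ ω, ((A ω) ^ v) ⊗ₖ ((A ω) ^ (v + (u + 1))) ∂P) +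
              ∫ ω, ((A ω) ^ (v + (u + 1))) ⊗ₖ ((A ω) ^ v) ∂P).mulVec Om0.vecCol := by
  classical
  set cp : ℝ := ‖(1 : Matrix (Fin p) (Fin p) ℝ)‖ with hcp
  have hcp0 : 0 ≤ cp := norm_nonneg _
  have hr0 : 0 ≤ r := by
    obtain ⟨ω, hω⟩ := hbound.exists
    exact le_trans (norm_nonneg _) hω
  have hr2 : r ^ 2 < 1 := by nlinarith
  have hr20 : (0:ℝ) ≤ r ^ 2 := sq_nonneg r
  set C : ℝ := ‖Om0‖ / (1 - r ^ 2) with hCdef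
  have hC0 : 0 ≤ C := div_nonneg (norm_nonneg _) (by linarith)
  -- a.e. bound on powers
  have hpow : ∀ᵐ ω ∂P, ∀ a : ℕ, ‖(A ω) ^ a‖ ≤ cp * r ^ a := by
    filter_upwards [hbound] with ω hω
    intro a
    induction a with
    | zero => simp [hcp]
    | succ a ih =>
      calc ‖(A ω) ^ (a + 1)‖ = ‖(A ω) ^ a * A ω‖ := by rw [pow_succ]
        _ ≤ ‖(A ω) ^ a‖ * ‖A ω‖ := Matrix.frobenius_norm_mul _ _
        _ ≤ (cp * r ^ a) * r :=
            mul_le_mul ih hω (norm_nonneg _) (mul_nonneg hcp0 (pow_nonneg hr0 a))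
        _ = cp * r ^ (a + 1) := by ring
  -- a.e. bound on Γ
  have hΓb : ∀ᵐ ω ∂P, ‖Γ ω‖ ≤ C := by
    filter_upwards [hbound, hΓ] with ω h1 h2
    have m1 := Matrix.frobenius_norm_mul (A ω * Γ ω) ((A ω)ᵀ)
    have m2 := Matrix.frobenius_norm_mul (A ω) (Γ ω)
    rw [Matrix.frobenius_norm_transpose] at m1
    have t1 : ‖A ω * Γ ω‖ ≤ r * ‖Γ ω‖ :=
      le_trans m2 (mul_le_mul_of_nonneg_right h1 (norm_nonneg _))
    have t2 : ‖A ω * Γ ω * (A ω)ᵀ‖ ≤ (r * ‖Γ ω‖) * r :=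
      le_trans m1 (mul_le_mul t1 h1 (norm_nonneg _) (mul_nonneg hr0 (norm_nonneg _)))
    have e : ‖Γ ω‖ ≤ r ^ 2 * ‖Γ ω‖ + ‖Om0‖ := by
      calc ‖Γ ω‖ = ‖A ω * Γ ω * (A ω)ᵀ + Om0‖ := by rw [← h2]
        _ ≤ ‖A ω * Γ ω * (A ω)ᵀ‖ + ‖Om0‖ := norm_add_le _ _
        _ ≤ r ^ 2 * ‖Γ ω‖ + ‖Om0‖ := by nlinarith
    rw [hCdef, le_div_iff₀ (by linarith : (0:ℝ) < 1 - r ^ 2)]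
    nlinarith
  -- the basic series representation of Γ
  have hbase : ∀ᵐ ω ∂P, HasSum (fun v : ℕ => (A ω) ^ v * Om0 * ((A ω) ^ v)ᵀ) (Γ ω) := by
    filter_upwards [hΓ, hΓb, hpow] with ω h2 hb hp
    have hterm : ∀ v : ℕ, ‖(A ω) ^ v * Om0 * ((A ω) ^ v)ᵀ‖
        ≤ cp * cp * ‖Om0‖ * (r ^ 2) ^ v := by
      intro v
      have m1 := Matrix.frobenius_norm_mul ((A ω) ^ v * Om0) (((A ω) ^ v)ᵀ)
      have m2 := Matrix.frobenius_norm_mul ((A ω) ^ v) Om0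
      rw [Matrix.frobenius_norm_transpose] at m1
      have t1 : ‖(A ω) ^ v * Om0‖ ≤ cp * r ^ v * ‖Om0‖ :=
        le_trans m2 (mul_le_mul_of_nonneg_right (hp v) (norm_nonneg Om0))
      have t2 := le_trans m1 (mul_le_mul t1 (hp v) (norm_nonneg _)
        (mul_nonneg (mul_nonneg hcp0 (pow_nonneg hr0 v)) (norm_nonneg Om0)))
      calc ‖(A ω) ^ v * Om0 * ((A ω) ^ v)ᵀ‖ ≤ (cp * r ^ v * ‖Om0‖) * (cp * r ^ v) := t2
        _ = cp * cp * ‖Om0‖ * (r ^ 2) ^ v := by ring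
    have hS : Summable (fun v : ℕ => (A ω) ^ v * Om0 * ((A ω) ^ v)ᵀ) :=
      Summable.of_norm (Summable.of_nonneg_of_le (fun v => norm_nonneg _) hterm
        ((summable_geometric_of_lt_one hr20 hr2).mul_left _))
    have hpart : ∀ n : ℕ, Γ ω = (∑ v ∈ Finset.range n, (A ω) ^ v * Om0 * ((A ω) ^ v)ᵀ)
        + (A ω) ^ n * Γ ω * ((A ω) ^ n)ᵀ := by
      intro n
      induction n with
      | zero => simp
      | succ n ih =>
        have e : (A ω) ^ n * Γ ω * ((A ω) ^ n)ᵀ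
            = (A ω) ^ n * Om0 * ((A ω) ^ n)ᵀ
              + (A ω) ^ (n + 1) * Γ ω * ((A ω) ^ (n + 1))ᵀ := by
          nth_rewrite 1 [h2]
          rw [pow_succ, Matrix.transpose_mul]
          noncomm_ring
        rw [Finset.sum_range_succ]
        calc Γ ω = (∑ v ∈ Finset.range n, (A ω) ^ v * Om0 * ((A ω) ^ v)ᵀ)
              + (A ω) ^ n * Γ ω * ((A ω) ^ n)ᵀ := ih
          _ = _ := by rw [e, ← add_assoc]
    have hrem : Filter.Tendsto (fun n : ℕ => (A ω) ^ n * Γ ω * ((A ω) ^ n)ᵀ)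
        Filter.atTop (nhds 0) := by
      apply squeeze_zero_norm (a := fun n : ℕ => cp * C * cp * (r ^ 2) ^ n)
      · intro n
        have m1 := Matrix.frobenius_norm_mul ((A ω) ^ n * Γ ω) (((A ω) ^ n)ᵀ)
        have m2 := Matrix.frobenius_norm_mul ((A ω) ^ n) (Γ ω)
        rw [Matrix.frobenius_norm_transpose] at m1
        have t1 : ‖(A ω) ^ n * Γ ω‖ ≤ cp * r ^ n * C :=
          le_trans m2 (mul_le_mul (hp n) hb (norm_nonneg _)
            (mul_nonneg hcp0 (pow_nonneg hr0 n)))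
        have t2 := le_trans m1 (mul_le_mul t1 (hp n) (norm_nonneg _)
          (mul_nonneg (mul_nonneg hcp0 (pow_nonneg hr0 n)) hC0))
        calc ‖(A ω) ^ n * Γ ω * ((A ω) ^ n)ᵀ‖ ≤ (cp * r ^ n * C) * (cp * r ^ n) := t2
          _ = cp * C * cp * (r ^ 2) ^ n := by ring
      · simpa using (tendsto_pow_atTop_nhds_zero_of_lt_one hr20 hr2).const_mul (cp * C * cp)
    have hlim : Filter.Tendsto
        (fun n : ℕ => ∑ v ∈ Finset.range n, (A ω) ^ v * Om0 * ((A ω) ^ v)ᵀ)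
        Filter.atTop (nhds (Γ ω)) := by
      have hfn : (fun n : ℕ => ∑ v ∈ Finset.range n, (A ω) ^ v * Om0 * ((A ω) ^ v)ᵀ)
          = fun n : ℕ => Γ ω - (A ω) ^ n * Γ ω * ((A ω) ^ n)ᵀ := by
        funext n
        rw [eq_sub_iff_add_eq]
        exact (hpart n).symm
      rw [hfn]
      simpa using tendsto_const_nhds.sub hrem
    have heq := tendsto_nhds_unique hS.hasSum.tendsto_sum_nat hlim
    exact heq ▸ hS.hasSum
  -- series for A^u * Γ
  have hsum_u : ∀ᵐ ω ∂P, ∀ u : ℕ,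
      HasSum (fun v : ℕ => (A ω) ^ (v + u) * Om0 * ((A ω) ^ v)ᵀ) ((A ω) ^ u * Γ ω) := by
    filter_upwards [hbase] with ω h
    intro u
    have h2 := h.mapL (mulLeftL ((A ω) ^ u))
    simp only [mulLeftL_apply] at h2
    have e : (fun v : ℕ => (A ω) ^ (v + u) * Om0 * ((A ω) ^ v)ᵀ)
        = fun v : ℕ => (A ω) ^ u * ((A ω) ^ v * Om0 * ((A ω) ^ v)ᵀ) := by
      funext v
      rw [← mul_assoc, ← mul_assoc, ← pow_add, Nat.add_comm u v]
    rw [e]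
    exact h2
  have hsumT : ∀ᵐ ω ∂P, ∀ u : ℕ,
      HasSum (fun v : ℕ => (A ω) ^ v * Om0 * ((A ω) ^ (v + u))ᵀ) (((A ω) ^ u * Γ ω)ᵀ) := by
    filter_upwards [hsum_u] with ω h
    intro u
    have h2 := (h u).mapL transposeL
    simp only [transposeL_apply] at h2
    have e : (fun v : ℕ => (A ω) ^ v * Om0 * ((A ω) ^ (v + u))ᵀ)
        = fun v : ℕ => ((A ω) ^ (v + u) * Om0 * ((A ω) ^ v)ᵀ)ᵀ := by
      funext v
      simp [Matrix.transpose_mul, Matrix.transpose_transpose, hOm0.eq, Matrix.mul_assoc]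
    rw [e]
    exact h2
  have hvec : ∀ᵐ ω ∂P, ∀ u : ℕ,
      HasSum (fun v : ℕ => (((A ω) ^ v) ⊗ₖ ((A ω) ^ (v + u))).mulVec Om0.vecCol)
        (((A ω) ^ u * Γ ω).vecCol) := by
    filter_upwards [hsum_u] with ω h
    intro u
    have h2 := (h u).mapL vecColL
    simp only [vecColL_apply] at h2
    have e : (fun v : ℕ => (((A ω) ^ v) ⊗ₖ ((A ω) ^ (v + u))).mulVec Om0.vecCol)
        = fun v : ℕ => ((A ω) ^ (v + u) * Om0 * ((A ω) ^ v)ᵀ).vecCol :=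
      funext fun v => vecCol_mulVec _ _ _
    rw [e]
    exact h2
  have hvecT : ∀ᵐ ω ∂P, ∀ u : ℕ,
      HasSum (fun v : ℕ => (((A ω) ^ (v + u)) ⊗ₖ ((A ω) ^ v)).mulVec Om0.vecCol)
        ((((A ω) ^ u * Γ ω)ᵀ).vecCol) := by
    filter_upwards [hsumT] with ω h
    intro u
    have h2 := (h u).mapL vecColL
    simp only [vecColL_apply] at h2
    have e : (fun v : ℕ => (((A ω) ^ (v + u)) ⊗ₖ ((A ω) ^ v)).mulVec Om0.vecCol)
        = fun v : ℕ => ((A ω) ^ v * Om0 * ((A ω) ^ (v + u))ᵀ).vecCol :=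
      funext fun v => vecCol_mulVec _ _ _
    rw [e]
    exact h2
  -- measurability / integrability facts
  have hkron_meas : ∀ a b : ℕ, Measurable (fun ω => ((A ω) ^ a) ⊗ₖ ((A ω) ^ b)) :=
    fun a b => (hA.matrix_pow a).matrix_kron (hA.matrix_pow b)
  have hkron_bound : ∀ a b : ℕ, ∀ᵐ ω ∂P,
      ‖((A ω) ^ a) ⊗ₖ ((A ω) ^ b)‖ ≤ (cp * r ^ a) * (cp * r ^ b) := by
    intro a b
    filter_upwards [hpow] with ω hp
    rw [kron_norm]
    exact mul_le_mul (hp a) (hp b) (norm_nonneg _) (mul_nonneg hcp0 (pow_nonneg hr0 a))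
  have hkron_int : ∀ a b : ℕ, @Integrable (Matrix (Fin p × Fin p) (Fin p × Fin p) ℝ) _
      SeminormedAddGroup.toContinuousENorm S _ (fun ω => ((A ω) ^ a) ⊗ₖ ((A ω) ^ b)) P := fun a b =>
    Integrable.mono' (integrable_const _) ((show Measurable (β := Fin p × Fin p → Fin p × Fin p → ℝ)
      _ from hkron_meas a b).aestronglyMeasurable)
      (hkron_bound a b)
  have hkron_norm_int : ∀ a b : ℕ,
      ‖∫ ω, ((A ω) ^ a) ⊗ₖ ((A ω) ^ b) ∂P‖ ≤ (cp * r ^ a) * (cp * r ^ b) := by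
    intro a b
    calc ‖∫ ω, ((A ω) ^ a) ⊗ₖ ((A ω) ^ b) ∂P‖
        ≤ ∫ ω, ‖((A ω) ^ a) ⊗ₖ ((A ω) ^ b)‖ ∂P := norm_integral_le_integral_norm _
      _ ≤ ∫ _ω, (cp * r ^ a) * (cp * r ^ b) ∂P :=
          integral_mono_ae (hkron_int a b).norm (integrable_const _) (hkron_bound a b)
      _ = (cp * r ^ a) * (cp * r ^ b) := by simp
  have hAuΓ_meas : ∀ u : ℕ, Measurable (fun ω => (A ω) ^ u * Γ ω) :=
    fun u => (hA.matrix_pow u).matrix_mul' hΓmeas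
  have hAuΓ_bound : ∀ u : ℕ, ∀ᵐ ω ∂P, ‖(A ω) ^ u * Γ ω‖ ≤ cp * r ^ u * C := by
    intro u
    filter_upwards [hpow, hΓb] with ω hp hb
    exact le_trans (Matrix.frobenius_norm_mul _ _)
      (mul_le_mul (hp u) hb (norm_nonneg _) (mul_nonneg hcp0 (pow_nonneg hr0 u)))
  have hAuΓ_int : ∀ u : ℕ, @Integrable (Matrix (Fin p) (Fin p) ℝ) _
      SeminormedAddGroup.toContinuousENorm S _ (fun ω => (A ω) ^ u * Γ ω) P := fun u =>
    Integrable.mono' (integrable_const _) ((show Measurable (β := Fin p → Fin p → ℝ)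
      _ from hAuΓ_meas u).aestronglyMeasurable) (hAuΓ_bound u)
  -- uniform bound on the vec'd sandwich terms
  have hbnd : ∀ a b : ℕ, ∀ᵐ ω ∂P, ‖((A ω) ^ a * Om0 * ((A ω) ^ b)ᵀ).vecCol‖
      ≤ cp * cp * ‖Om0‖ * (r ^ a * r ^ b) := by
    intro a b
    filter_upwards [hpow] with ω hp
    refine le_trans (vecCol_norm_le _) ?_
    have m1 := Matrix.frobenius_norm_mul ((A ω) ^ a * Om0) (((A ω) ^ b)ᵀ)
    have m2 := Matrix.frobenius_norm_mul ((A ω) ^ a) Om0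
    rw [Matrix.frobenius_norm_transpose] at m1
    have t1 : ‖(A ω) ^ a * Om0‖ ≤ cp * r ^ a * ‖Om0‖ :=
      le_trans m2 (mul_le_mul_of_nonneg_right (hp a) (norm_nonneg Om0))
    have t2 := le_trans m1 (mul_le_mul t1 (hp b) (norm_nonneg _)
      (mul_nonneg (mul_nonneg hcp0 (pow_nonneg hr0 a)) (norm_nonneg Om0)))
    calc ‖(A ω) ^ a * Om0 * ((A ω) ^ b)ᵀ‖ ≤ (cp * r ^ a * ‖Om0‖) * (cp * r ^ b) := t2
      _ = cp * cp * ‖Om0‖ * (r ^ a * r ^ b) := by ring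
  -- generic interchange of sum and integral
  have swap : ∀ (g : ℕ → S → (Fin p × Fin p → ℝ)) (b : ℕ → ℝ),
      (∀ v, Measurable (g v)) → (∀ v, ∀ᵐ ω ∂P, ‖g v ω‖ ≤ b v) → Summable b →
      ∀ (T : S → (Fin p × Fin p → ℝ)), (∀ᵐ ω ∂P, HasSum (fun v => g v ω) (T ω)) →
      HasSum (fun v => ∫ ω, g v ω ∂P) (∫ ω, T ω ∂P) := by
    intro g b gm gb bs T hT
    have gint : ∀ v, Integrable (g v) P := fun v =>
      Integrable.mono' (integrable_const _) ((gm v).aestronglyMeasurable) (gb v)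
    have hsum : Summable (fun v => ∫ ω, ‖g v ω‖ ∂P) := by
      refine Summable.of_nonneg_of_le
        (fun v => integral_nonneg fun ω => norm_nonneg _) (fun v => ?_) bs
      calc ∫ ω, ‖g v ω‖ ∂P ≤ ∫ _ω, b v ∂P :=
            integral_mono_ae (gint v).norm (integrable_const _) (gb v)
        _ = b v := by simp
    have H := MeasureTheory.hasSum_integral_of_summable_integral_norm gint hsum
    have e : ∫ ω, (∑' v, g v ω) ∂P = ∫ ω, T ω ∂P :=
      integral_congr_ae (hT.mono fun ω h => h.tsum_eq)
    rwa [e] at H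
  -- summable bound function
  have hbsum : ∀ u : ℕ, Summable (fun v : ℕ => cp * cp * ‖Om0‖ * (r ^ (v + u) * r ^ v)) := by
    intro u
    refine Summable.congr
      (((summable_geometric_of_lt_one hr20 hr2).mul_left (cp * cp * ‖Om0‖ * r ^ u))) fun v => ?_
    ring
  -- main per-u identities
  have HF : ∀ u : ℕ, HasSum
      (fun v : ℕ => (∫ ω, ((A ω) ^ v) ⊗ₖ ((A ω) ^ (v + u)) ∂P).mulVec Om0.vecCol)
      ((Υ (u : ℤ)).vecCol) := by
    intro u
    have hg : HasSum
        (fun v : ℕ => ∫ ω, (((A ω) ^ v) ⊗ₖ ((A ω) ^ (v + u))).mulVec Om0.vecCol ∂P)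
        (∫ ω, ((A ω) ^ u * Γ ω).vecCol ∂P) := by
      refine swap _ (fun v : ℕ => cp * cp * ‖Om0‖ * (r ^ (v + u) * r ^ v))
        (fun v => (hkron_meas v (v + u)).matrix_mulVec _) (fun v => ?_) (hbsum u) _ ?_
      · filter_upwards [hbnd (v + u) v] with ω h
        rw [vecCol_mulVec]
        exact h
      · filter_upwards [hvec] with ω h using h u
    have e1 : ∀ v : ℕ, ∫ ω, (((A ω) ^ v) ⊗ₖ ((A ω) ^ (v + u))).mulVec Om0.vecCol ∂P
        = (∫ ω, ((A ω) ^ v) ⊗ₖ ((A ω) ^ (v + u)) ∂P).mulVec Om0.vecCol := by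
      intro v
      have h := (mulVecL Om0.vecCol).integral_comp_comm (hkron_int v (v + u))
      exact h
    have e2 : ∫ ω, ((A ω) ^ u * Γ ω).vecCol ∂P = (Υ (u : ℤ)).vecCol := by
      have c1 := vecColL.integral_comp_comm (hAuΓ_int u)
      change ∫ ω, ((A ω) ^ u * Γ ω).vecCol ∂P = (∫ ω, (A ω) ^ u * Γ ω ∂P).vecCol at c1
      rw [c1, hΥ u]
    rw [show (fun v : ℕ => (∫ ω, ((A ω) ^ v) ⊗ₖ ((A ω) ^ (v + u)) ∂P).mulVec Om0.vecCol)
        = fun v : ℕ => ∫ ω, (((A ω) ^ v) ⊗ₖ ((A ω) ^ (v + u))).mulVec Om0.vecCol ∂P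
      from funext fun v => (e1 v).symm, ← e2]
    exact hg
  have HG : ∀ u : ℕ, HasSum
      (fun v : ℕ => (∫ ω, ((A ω) ^ (v + u)) ⊗ₖ ((A ω) ^ v) ∂P).mulVec Om0.vecCol)
      (((Υ (u : ℤ))ᵀ).vecCol) := by
    intro u
    have hg : HasSum
        (fun v : ℕ => ∫ ω, (((A ω) ^ (v + u)) ⊗ₖ ((A ω) ^ v)).mulVec Om0.vecCol ∂P)
        (∫ ω, (((A ω) ^ u * Γ ω)ᵀ).vecCol ∂P) := by
      refine swap _ (fun v : ℕ => cp * cp * ‖Om0‖ * (r ^ (v + u) * r ^ v))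
        (fun v => (hkron_meas (v + u) v).matrix_mulVec _) (fun v => ?_) (hbsum u) _ ?_
      · filter_upwards [hbnd v (v + u)] with ω h
        rw [vecCol_mulVec]
        refine le_trans h (le_of_eq ?_)
        ring
      · filter_upwards [hvecT] with ω h using h u
    have e1 : ∀ v : ℕ, ∫ ω, (((A ω) ^ (v + u)) ⊗ₖ ((A ω) ^ v)).mulVec Om0.vecCol ∂P
        = (∫ ω, ((A ω) ^ (v + u)) ⊗ₖ ((A ω) ^ v) ∂P).mulVec Om0.vecCol := by
      intro v
      have h := (mulVecL Om0.vecCol).integral_comp_comm (hkron_int (v + u) v)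
      exact h
    have e2 : ∫ ω, (((A ω) ^ u * Γ ω)ᵀ).vecCol ∂P = ((Υ (u : ℤ))ᵀ).vecCol := by
      have hTint : @Integrable (Matrix (Fin p) (Fin p) ℝ) _
          SeminormedAddGroup.toContinuousENorm S _ (fun ω => ((A ω) ^ u * Γ ω)ᵀ) P := by
        refine Integrable.mono' (integrable_const (cp * r ^ u * C))
          (show Measurable (β := Fin p → Fin p → ℝ)
            _ from (hAuΓ_meas u).matrix_transpose).aestronglyMeasurable ?_
        filter_upwards [hAuΓ_bound u] with ω h
        rwa [Matrix.frobenius_norm_transpose]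
      have c1 := vecColL.integral_comp_comm hTint
      change ∫ ω, (((A ω) ^ u * Γ ω)ᵀ).vecCol ∂P = (∫ ω, ((A ω) ^ u * Γ ω)ᵀ ∂P).vecCol at c1
      have c2 := transposeL.integral_comp_comm (hAuΓ_int u)
      change ∫ ω, ((A ω) ^ u * Γ ω)ᵀ ∂P = (∫ ω, (A ω) ^ u * Γ ω ∂P)ᵀ at c2
      rw [c1, c2, hΥ u]
    rw [show (fun v : ℕ => (∫ ω, ((A ω) ^ (v + u)) ⊗ₖ ((A ω) ^ v) ∂P).mulVec Om0.vecCol)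
        = fun v : ℕ => ∫ ω, (((A ω) ^ (v + u)) ⊗ₖ ((A ω) ^ v)).mulVec Om0.vecCol ∂P
      from funext fun v => (e1 v).symm, ← e2]
    exact hg
  -- norm bounds on Υ
  have hΥle : ∀ u : ℕ, ‖Υ (u : ℤ)‖ ≤ cp * C * r ^ u := by
    intro u
    rw [hΥ u]
    calc ‖∫ ω, (A ω) ^ u * Γ ω ∂P‖ ≤ ∫ ω, ‖(A ω) ^ u * Γ ω‖ ∂P :=
          norm_integral_le_integral_norm _
      _ ≤ ∫ _ω, cp * r ^ u * C ∂P :=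
          integral_mono_ae (hAuΓ_int u).norm (integrable_const _) (hAuΓ_bound u)
      _ = cp * r ^ u * C := by simp
      _ = cp * C * r ^ u := by ring
  have hneg : ∀ n : ℕ, Υ (-((n : ℤ) + 1)) = (Υ ((n : ℤ) + 1))ᵀ := by
    intro n
    have h := hΥneg (n + 1) (by omega)
    push_cast at h
    exact h
  have hΥv : ∀ u : ℕ, ‖(Υ (u : ℤ)).vecCol‖ ≤ cp * C * r ^ u :=
    fun u => le_trans (vecCol_norm_le _) (hΥle u)
  have hΥv' : ∀ n : ℕ, ‖(Υ ((n : ℤ) + 1)).vecCol‖ ≤ cp * C * r ^ (n + 1) := by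
    intro n
    have h := hΥv (n + 1)
    push_cast at h
    exact h
  have hΥvneg : ∀ n : ℕ, ‖(Υ (-((n : ℤ) + 1))).vecCol‖ ≤ cp * C * r ^ (n + 1) := by
    intro n
    rw [hneg n]
    refine le_trans (vecCol_norm_le _) ?_
    rw [Matrix.frobenius_norm_transpose]
    have h := hΥle (n + 1)
    push_cast at h
    exact h
  -- summability over ℤ
  have S1 : Summable (fun n : ℕ => ‖(Υ (n : ℤ)).vecCol‖) :=
    Summable.of_nonneg_of_le (fun _ => norm_nonneg _) hΥv
      ((summable_geometric_of_lt_one hr0 hr).mul_left (cp * C))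
  have S2geo : Summable (fun n : ℕ => cp * C * r ^ (n + 1)) :=
    Summable.congr ((summable_geometric_of_lt_one hr0 hr).mul_left (cp * C * r))
      (fun n => by ring)
  have S2 : Summable (fun n : ℕ => ‖(Υ (-((n : ℤ) + 1))).vecCol‖) :=
    Summable.of_nonneg_of_le (fun _ => norm_nonneg _) hΥvneg S2geo
  have Sz : Summable (fun u : ℤ => ‖(Υ u).vecCol‖) :=
    Summable.of_nat_of_neg_add_one S1 S2
  have V1 : Summable (fun n : ℕ => (Υ (n : ℤ)).vecCol) := Summable.of_norm S1
  have V2 : Summable (fun n : ℕ => (Υ (-((n : ℤ) + 1))).vecCol) := Summable.of_norm S2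
  have V1s : Summable (fun n : ℕ => (Υ ((n : ℤ) + 1)).vecCol) :=
    Summable.of_norm (Summable.of_nonneg_of_le (fun _ => norm_nonneg _) hΥv' S2geo)
  refine ⟨Sz, ?_⟩
  -- the u = 0 term
  have hT0 : (Υ (0 : ℤ)).vecCol
      = (∑' v : ℕ, ∫ ω, ((A ω) ⊗ₖ (A ω)) ^ v ∂P).mulVec Om0.vecCol := by
    have hKs : Summable (fun v : ℕ => ∫ ω, ((A ω) ^ v) ⊗ₖ ((A ω) ^ v) ∂P) := by
      refine Summable.of_norm (Summable.of_nonneg_of_le (fun v => norm_nonneg _)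
        (fun v => ?_) ((summable_geometric_of_lt_one hr20 hr2).mul_left (cp * cp)))
      calc ‖∫ ω, ((A ω) ^ v) ⊗ₖ ((A ω) ^ v) ∂P‖ ≤ (cp * r ^ v) * (cp * r ^ v) :=
            hkron_norm_int v v
        _ = cp * cp * (r ^ 2) ^ v := by ring
    have H0 := hKs.hasSum.mapL (mulVecL Om0.vecCol)
    simp only [mulVecL_apply] at H0
    have hF0 := HF 0
    simp only [Nat.add_zero] at hF0
    push_cast at hF0
    have e : (∑' v : ℕ, ∫ ω, ((A ω) ^ v) ⊗ₖ ((A ω) ^ v) ∂P)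
        = ∑' v : ℕ, ∫ ω, ((A ω) ⊗ₖ (A ω)) ^ v ∂P :=
      tsum_congr fun v =>
        integral_congr_ae (Filter.Eventually.of_forall fun ω => (kron_pow (A ω) (A ω) v).symm)
    rw [hF0.unique H0, e]
  -- the inner sums for u ≥ 1
  have hInner : ∀ u : ℕ, (∑' v : ℕ,
      ((∫ ω, ((A ω) ^ v) ⊗ₖ ((A ω) ^ (v + (u + 1))) ∂P) +
        ∫ ω, ((A ω) ^ (v + (u + 1))) ⊗ₖ ((A ω) ^ v) ∂P).mulVec Om0.vecCol)
      = (Υ ((u : ℤ) + 1)).vecCol + (Υ (-((u : ℤ) + 1))).vecCol := by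
    intro u
    have h1 := HF (u + 1)
    have h2 := HG (u + 1)
    have h3 := h1.add h2
    have h4 : (fun v : ℕ =>
        ((∫ ω, ((A ω) ^ v) ⊗ₖ ((A ω) ^ (v + (u + 1))) ∂P) +
          ∫ ω, ((A ω) ^ (v + (u + 1))) ⊗ₖ ((A ω) ^ v) ∂P).mulVec Om0.vecCol)
        = fun v : ℕ =>
          (∫ ω, ((A ω) ^ v) ⊗ₖ ((A ω) ^ (v + (u + 1))) ∂P).mulVec Om0.vecCol +
          (∫ ω, ((A ω) ^ (v + (u + 1))) ⊗ₖ ((A ω) ^ v) ∂P).mulVec Om0.vecCol :=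
      funext fun v => Matrix.add_mulVec _ _ _
    rw [h4, h3.tsum_eq, hneg u]
    push_cast
    rfl
  -- put everything together
  have hsplit := tsum_of_nat_of_neg_add_one (f := fun u : ℤ => (Υ u).vecCol) V1 V2
  rw [hsplit, Summable.tsum_eq_zero_add V1]
  have hR : (∑' u : ℕ, ∑' v : ℕ,
      ((∫ ω, ((A ω) ^ v) ⊗ₖ ((A ω) ^ (v + (u + 1))) ∂P) +
        ∫ ω, ((A ω) ^ (v + (u + 1))) ⊗ₖ ((A ω) ^ v) ∂P).mulVec Om0.vecCol)
      = (∑' n : ℕ, (Υ ((n : ℤ) + 1)).vecCol) + ∑' n : ℕ, (Υ (-((n : ℤ) + 1))).vecCol := by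
    rw [tsum_congr hInner, Summable.tsum_add V1s V2]
  rw [hR, ← hT0]
  push_cast
  abel
end
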